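/- Assume π_b(ω̃_b) > 0 for all b ∈ B and ω̃_b ∈ W_b. Suppose q is a CCE for utilities (v_b)_{b∈B} witnessed by functions θ_b : W_b → ℝ, and suppose u_b(ω, a) ≥ v_b(ω, a) for all b ∈ B, ω ∈ W, a ∈ A. Define ε_b(ω̃_b) = max{0, max_{ã_b ∈ A_b} ( ū_b(ω̃_b, ã_b)/π_b(ω̃_b) − θ_b(ω̃_b) )}, η_b(ω̃_b) = θ_b(ω̃_b) + ε_b(ω̃_b), and ε = max_{b∈B} Σ_{ω_b ∈ W_b} π_b(ω_b)·ε_b(ω_b). Then ε ≥ 0 and: (i) ū_b(ω̃_b, ã_b) ≤ π_b(ω̃_b)·η_b(ω̃_b) for all b ∈ B, ω̃_b ∈ W_b, ã_b ∈ A_b; (ii) ū_b ≥ Σ_{ω_b ∈ W_b} π_b(ω_b)·η_b(ω_b) − ε for all b ∈ B. That is, a CCE strategy with respect to the auxiliary utilities (v_b) is an ε-CCE with respect to the utilities (u_b), witnessed by (η_b) (Proposition 2). -/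
import Mathlib


open Finset

/-- Proposition 2: a CCE strategy with respect to the auxiliary
utilities `v b` is an ε-CCE with respect to the utilities `u b`, witnessed by
`η b = θ b + ε b`. -/
theorem cce_of_aux_is_eps_cce
    {B : Type*} [Fintype B] [DecidableEq B] [Nonempty B]
    {W : B → Type*} [∀ b, Fintype (W b)] [∀ b, DecidableEq (W b)]
    {A : B → Type*} [∀ b, Fintype (A b)] [∀ b, Nonempty (A b)]
    -- probability mass function on global states
    (π : (∀ c, W c) → ℝ) (hπ : ∀ ω, 0 ≤ π ω) (hπ1 : ∑ ω : ∀ c, W c, π ω = 1)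
    -- stationary mixed strategy: a pmf on global actions for each global state
    (q : (∀ c, W c) → (∀ c, A c) → ℝ)
    (hq : ∀ ω a, 0 ≤ q ω a) (hq1 : ∀ ω, ∑ a : ∀ c, A c, q ω a = 1)
    -- utilities and auxiliary utilities
    (u v : ∀ b, (∀ c, W c) → (∀ c, A c) → ℝ)
    -- state marginals, positive everywhere
    (πb : ∀ b, W b → ℝ)
    (hπb : ∀ b (ω' : W b), πb b ω' = ∑ ω : ∀ c, W c, if ω b = ω' then π ω else 0)
    (hπbpos : ∀ b (ω' : W b), 0 < πb b ω')
    -- conditional deviation utilities for u and for v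
    (ubar vbar : ∀ b, W b → A b → ℝ)
    (hubar : ∀ b (ω' : W b) (a' : A b), ubar b ω' a' =
      ∑ ω : ∀ c, W c, ∑ a : ∀ c, A c,
        if ω b = ω' then π ω * q ω a * u b ω (Function.update a b a') else 0)
    (hvbar : ∀ b (ω' : W b) (a' : A b), vbar b ω' a' =
      ∑ ω : ∀ c, W c, ∑ a : ∀ c, A c,
        if ω b = ω' then π ω * q ω a * v b ω (Function.update a b a') else 0)
    -- q is a CCE for the auxiliary utilities (v b), witnessed by θ
    (θ : ∀ b, W b → ℝ)
    (hCCE1 : ∀ b (ω' : W b) (a' : A b), vbar b ω' a' ≤ πb b ω' * θ b ω')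
    (hCCE2 : ∀ b, (∑ ω : ∀ c, W c, ∑ a : ∀ c, A c, π ω * q ω a * v b ω a) ≥
      ∑ ω' : W b, πb b ω' * θ b ω')
    -- u dominates v pointwise
    (huv : ∀ b ω a, u b ω a ≥ v b ω a)
    -- the constructed ε_b, η_b and ε
    (εb : ∀ b, W b → ℝ)
    (hεb : ∀ b (ω' : W b), εb b ω' = max 0
      (Finset.univ.sup' Finset.univ_nonempty
        (fun a' : A b => ubar b ω' a' / πb b ω' - θ b ω')))
    (η : ∀ b, W b → ℝ)
    (hη : ∀ b (ω' : W b), η b ω' = θ b ω' + εb b ω')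
    (ε : ℝ)
    (hε : ε = Finset.univ.sup' Finset.univ_nonempty
      (fun b : B => ∑ ω' : W b, πb b ω' * εb b ω')) :
    0 ≤ ε ∧
    (∀ b (ω' : W b) (a' : A b), ubar b ω' a' ≤ πb b ω' * η b ω') ∧
    (∀ b, (∑ ω : ∀ c, W c, ∑ a : ∀ c, A c, π ω * q ω a * u b ω a) ≥
      ∑ ω' : W b, πb b ω' * η b ω' - ε) := by

  have hεbnn : ∀ b (ω' : W b), 0 ≤ εb b ω' := fun b ω' => by
    rw [hεb]; exact le_max_left _ _
  have hεge : ∀ b, (∑ ω' : W b, πb b ω' * εb b ω') ≤ ε := fun b => by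
    rw [hε]; exact Finset.le_sup' (fun b : B => ∑ ω' : W b, πb b ω' * εb b ω') (Finset.mem_univ b)
  refine ⟨?_, ?_, ?_⟩
  · obtain ⟨b⟩ := ‹Nonempty B›
    refine le_trans ?_ (hεge b)
    exact Finset.sum_nonneg fun ω' _ =>
      mul_nonneg (hπbpos b ω').le (hεbnn b ω')
  · intro b ω' a'
    have h1 : ubar b ω' a' / πb b ω' - θ b ω' ≤ εb b ω' := by
      rw [hεb]
      exact le_max_of_le_right (Finset.le_sup' (fun a'' : A b => ubar b ω' a'' / πb b ω' - θ b ω') (Finset.mem_univ a'))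
    have hpos := hπbpos b ω'
    rw [hη]
    have := (div_le_iff₀ hpos).mp (by linarith : ubar b ω' a' / πb b ω' ≤ θ b ω' + εb b ω')
    linarith [this, mul_comm (θ b ω' + εb b ω') (πb b ω')]
  · intro b
    have h1 : (∑ ω : ∀ c, W c, ∑ a : ∀ c, A c, π ω * q ω a * v b ω a)
        ≤ ∑ ω : ∀ c, W c, ∑ a : ∀ c, A c, π ω * q ω a * u b ω a := by
      refine Finset.sum_le_sum fun ω _ => Finset.sum_le_sum fun a _ => ?_
      exact mul_le_mul_of_nonneg_left (huv b ω a) (mul_nonneg (hπ ω) (hq ω a))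
    have h2 := hCCE2 b
    have h3 : ∑ ω' : W b, πb b ω' * η b ω'
        = (∑ ω' : W b, πb b ω' * θ b ω') + ∑ ω' : W b, πb b ω' * εb b ω' := by
      rw [← Finset.sum_add_distrib]
      exact Finset.sum_congr rfl fun ω' _ => by rw [hη]; ring
    have := hεge b
    rw [h3]; linarith
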